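/- If a tower {G_n}_{n∈ω} of topological groups satisfies the Group Condition (GC), then the Bamboo-Shoot topology τ_BS is a (possibly non-Hausdorff) group topology on G := ⋃_{n∈ω} G_n, i.e., multiplication and inversion on G are τ_BS-continuous; consequently τ_BS coincides with τ_gr, the finest group topology on G making all inclusions G_n → G continuous, so (G, τ_BS) = glim G_n. -/

import Mathlib

open Topology Filter Set Pointwise

/-- The finite product `U k · U (k+1) ⋯ U (k+j)` of a sequence of subsets of a group. -/
def bsProd {G : Type*} [Group G] (U : ℕ → Set G) (k : ℕ) : ℕ → Set G
  | 0 => U k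
  | j + 1 => bsProd U k j * U (k + (j + 1))

/-- `U⁺[k] = ⋃_{n ≥ k} U k · U (k+1) ⋯ U n`. -/
def bsPlus {G : Type*} [Group G] (U : ℕ → Set G) (k : ℕ) : Set G :=
  ⋃ j, bsProd U k j

/-- The Bamboo-Shoot set `U[k] = (U⁺[k])⁻¹ · U⁺[k]`. -/
def bsU {G : Type*} [Group G] (U : ℕ → Set G) (k : ℕ) : Set G :=
  (bsPlus U k)⁻¹ * bsPlus U k

/-- A tower of topological groups inside an ambient (abstract) group `G`:
an increasing sequence of subgroups covering `G`, each carrying its own group topology,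
such that all inclusions `G_n → G_{n+1}` are continuous. -/
structure GroupTower (G : Type*) [Group G] where
  H : ℕ → Subgroup G
  τ : ∀ n, TopologicalSpace (H n)
  topGroup : ∀ n, @IsTopologicalGroup (H n) (τ n) _
  mono : ∀ n, H n ≤ H (n + 1)
  union : ∀ g : G, ∃ n, g ∈ H n
  incl_cont : ∀ n, Continuous[τ n, τ (n + 1)] (Subgroup.inclusion (mono n))

namespace GroupTower

variable {G : Type*} [Group G]

/-- The tower is closed: each `G_n` carries the subspace topology from `G_{n+1}`
and is closed in `G_{n+1}`. -/
def IsClosedTower (T : GroupTower G) : Prop :=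
  ∀ n, T.τ n = (T.τ (n + 1)).induced (Subgroup.inclusion (T.mono n)) ∧
    IsClosed[T.τ (n + 1)] (Set.range (Subgroup.inclusion (T.mono n)))

/-- `U` (viewed as a subset of the ambient group) is an open symmetric neighborhood of
the identity in `G_n`. -/
def NsMem (T : GroupTower G) (n : ℕ) (U : Set G) : Prop :=
  U ⊆ (T.H n : Set G) ∧ IsOpen[T.τ n] (((↑) : T.H n → G) ⁻¹' U) ∧ (1 : G) ∈ U ∧ U⁻¹ = U

/-- The Group Condition (GC). -/
def GC (T : GroupTower G) : Prop :=
  ∀ U : ℕ → Set G, (∀ n, T.NsMem n (U n)) → ∀ k : ℕ,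
    ∃ V : ℕ → Set G, (∀ n, T.NsMem n (V n)) ∧ bsU V k ⊆ bsPlus U k

/-- `τBS` is the Bamboo-Shoot topology of the tower: at every point `g` the sets
`g • U[k]` form a neighborhood base. -/
def IsBambooShoot (T : GroupTower G) (τBS : TopologicalSpace G) : Prop :=
  ∀ g : G, (@nhds G τBS g).HasBasis
    (fun p : (ℕ → Set G) × ℕ => ∀ n, T.NsMem n (p.1 n))
    (fun p => g • bsU p.1 p.2)

/-- `τind` is the inductive limit topology of the tower in the category of topological
spaces: a set is open iff its trace on every `G_n` is open. -/
def IsIndTop (T : GroupTower G) (τind : TopologicalSpace G) : Prop :=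
  ∀ A : Set G, IsOpen[τind] A ↔ ∀ n, IsOpen[T.τ n] (((↑) : T.H n → G) ⁻¹' A)

/-- `t` is a group topology on `G` making all the inclusions `G_n → G` continuous. -/
def IsCompatGroupTopology (T : GroupTower G) (t : TopologicalSpace G) : Prop :=
  @IsTopologicalGroup G t _ ∧ ∀ n, Continuous[T.τ n, t] ((↑) : T.H n → G)

/-- `t` coincides with `τ_gr`, i.e. `(G, t) = glim G_n` : `t` is a group topology making
all inclusions continuous, and it is the finest such topology (every open set of any
such topology is `t`-open). -/
def IsGLim (T : GroupTower G) (t : TopologicalSpace G) : Prop :=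
  T.IsCompatGroupTopology t ∧
    ∀ t' : TopologicalSpace G, T.IsCompatGroupTopology t' →
      ∀ A : Set G, IsOpen[t'] A → IsOpen[t] A

end GroupTower

/-- A topological space is Ascoli if every compact subset of `C_k(X, ℝ)` is
equicontinuous. -/
def IsAscoliSpace (X : Type*) [TopologicalSpace X] : Prop :=
  ∀ K : Set C(X, ℝ), IsCompact K → Equicontinuous fun f : K => (f.1 : X → ℝ)

/-- A family of sets is a k-network. -/
def IsKNetwork {X : Type*} [TopologicalSpace X] (N : Set (Set X)) : Prop :=
  ∀ K U : Set X, IsCompact K → IsOpen U → K ⊆ U →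
    ∃ F : Set (Set X), F ⊆ N ∧ F.Finite ∧ K ⊆ ⋃₀ F ∧ ⋃₀ F ⊆ U

/-- A family of sets is locally finite. -/
def IsLocallyFiniteFamily {X : Type*} [TopologicalSpace X] (N : Set (Set X)) : Prop :=
  ∀ x : X, ∃ V ∈ 𝓝 x, {s ∈ N | (s ∩ V).Nonempty}.Finite

/-- An ℵ-space: a regular space with a σ-locally finite k-network. -/
def IsAlephSpace (X : Type*) [TopologicalSpace X] : Prop :=
  RegularSpace X ∧ ∃ N : ℕ → Set (Set X),
    (∀ n, IsLocallyFiniteFamily (N n)) ∧ IsKNetwork (⋃ n, N n)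

/-- An ℵ₀-space: a regular space with a countable k-network. -/
def IsAleph0Space (X : Type*) [TopologicalSpace X] : Prop :=
  RegularSpace X ∧ ∃ N : Set (Set X), N.Countable ∧ IsKNetwork N

/-- A k_ω-space. -/
def IsKOmegaSpace (X : Type*) [TopologicalSpace X] : Prop :=
  ∃ K : ℕ → Set X, (∀ n, IsCompact (K n)) ∧ (∀ n, K n ⊆ K (n + 1)) ∧
    (⋃ n, K n) = Set.univ ∧
    ∀ A : Set X, IsClosed A ↔ ∀ n, IsClosed (((↑) : K n → X) ⁻¹' A)

/-- An MK_ω-space: a k_ω-space witnessed by metrizable compact sets. -/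
def IsMKOmegaSpace (X : Type*) [TopologicalSpace X] : Prop :=
  ∃ K : ℕ → Set X, (∀ n, IsCompact (K n)) ∧
    (∀ n, TopologicalSpace.MetrizableSpace (K n)) ∧ (∀ n, K n ⊆ K (n + 1)) ∧
    (⋃ n, K n) = Set.univ ∧
    ∀ A : Set X, IsClosed A ↔ ∀ n, IsClosed (((↑) : K n → X) ⁻¹' A)

section BSAux
variable {G : Type*} [Group G]

lemma bsProd_succ (U : ℕ → Set G) (k j : ℕ) :
    bsProd U k (j + 1) = bsProd U k j * U (k + (j + 1)) := rfl

lemma one_mem_bsProd {U : ℕ → Set G} (hU : ∀ i, (1 : G) ∈ U i) (k j : ℕ) :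
    (1 : G) ∈ bsProd U k j := by
  induction j with
  | zero => exact hU k
  | succ j ih => rw [bsProd_succ]; simpa using Set.mul_mem_mul ih (hU _)

lemma subset_bsProd {U : ℕ → Set G} (hU : ∀ i, (1 : G) ∈ U i) (k j : ℕ) :
    U (k + j) ⊆ bsProd U k j := by
  cases j with
  | zero => simp [bsProd]
  | succ j =>
    intro x hx
    rw [bsProd_succ]
    simpa using Set.mul_mem_mul (one_mem_bsProd hU k j) hx

lemma bsProd_cons (U : ℕ → Set G) (k : ℕ) :
    ∀ j, bsProd U k (j + 1) = U k * bsProd U (k + 1) j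
  | 0 => by simp [bsProd]
  | (j + 1) => by
    have h : k + (j + 1 + 1) = k + 1 + (j + 1) := by omega
    rw [bsProd_succ, bsProd_cons U k j, bsProd_succ, mul_assoc, h]

lemma bsProd_subset_chain {W : ℕ → Set G} (h1 : ∀ n, (1 : G) ∈ W n)
    (hc : ∀ n, W (n + 1) * W (n + 1) ⊆ W n) :
    ∀ j k, bsProd W (k + 1) j ⊆ W k := by
  intro j
  induction j with
  | zero =>
    intro k x hx
    have hx' : x ∈ W (k + 1) := hx
    exact hc k (by simpa using Set.mul_mem_mul hx' (h1 (k + 1)))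
  | succ j ih =>
    intro k
    rw [bsProd_cons]
    intro x hx
    obtain ⟨a, ha, b, hb, rfl⟩ := Set.mem_mul.mp hx
    exact hc k (Set.mul_mem_mul ha (ih (k + 1) hb))

lemma one_mem_bsPlus {U : ℕ → Set G} (hU : ∀ i, (1 : G) ∈ U i) (k : ℕ) :
    (1 : G) ∈ bsPlus U k :=
  Set.mem_iUnion.mpr ⟨0, hU k⟩

lemma bsPlus_subset_bsU {U : ℕ → Set G} (hU : ∀ i, (1 : G) ∈ U i) (k : ℕ) :
    bsPlus U k ⊆ bsU U k := by
  intro x hx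
  have h1 : (1 : G) ∈ (bsPlus U k)⁻¹ := by
    simpa using one_mem_bsPlus hU k
  simpa [bsU] using Set.mul_mem_mul h1 hx

lemma one_mem_bsU {U : ℕ → Set G} (hU : ∀ i, (1 : G) ∈ U i) (k : ℕ) :
    (1 : G) ∈ bsU U k :=
  bsPlus_subset_bsU hU k (one_mem_bsPlus hU k)

lemma bsU_inv (U : ℕ → Set G) (k : ℕ) : (bsU U k)⁻¹ = bsU U k := by
  rw [bsU, mul_inv_rev, inv_inv]

lemma bsPlus_succ_subset {U : ℕ → Set G} (hU : ∀ i, (1 : G) ∈ U i) (k : ℕ) :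
    bsPlus U (k + 1) ⊆ bsPlus U k := by
  intro x hx
  obtain ⟨j, hj⟩ := Set.mem_iUnion.mp hx
  refine Set.mem_iUnion.mpr ⟨j + 1, ?_⟩
  rw [bsProd_cons]
  simpa using Set.mul_mem_mul (hU k) hj

lemma bsPlus_mono {U : ℕ → Set G} (hU : ∀ i, (1 : G) ∈ U i) {k k' : ℕ} (h : k ≤ k') :
    bsPlus U k' ⊆ bsPlus U k := by
  induction k', h using Nat.le_induction with
  | base => exact subset_rfl
  | succ m hm ih => exact (bsPlus_succ_subset hU m).trans ih

lemma bsU_mono {U : ℕ → Set G} (hU : ∀ i, (1 : G) ∈ U i) {k k' : ℕ} (h : k ≤ k') :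
    bsU U k' ⊆ bsU U k :=
  Set.mul_subset_mul (Set.inv_subset_inv.mpr (bsPlus_mono hU h)) (bsPlus_mono hU h)

lemma subset_bsPlus_of_le {U : ℕ → Set G} (hU : ∀ i, (1 : G) ∈ U i) {k m : ℕ} (h : k ≤ m) :
    U m ⊆ bsPlus U k := by
  obtain ⟨j, rfl⟩ := Nat.exists_eq_add_of_le h
  exact (subset_bsProd hU k j).trans (Set.subset_iUnion _ j)

lemma subset_bsU_of_le {U : ℕ → Set G} (hU : ∀ i, (1 : G) ∈ U i) {k m : ℕ} (h : k ≤ m) :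
    U m ⊆ bsU U k :=
  (subset_bsPlus_of_le hU h).trans (bsPlus_subset_bsU hU k)

lemma bsProd_mono_sets {U W : ℕ → Set G} (h : ∀ i, U i ⊆ W (i + 1)) (k : ℕ) :
    ∀ j, bsProd U k j ⊆ bsProd W (k + 1) j := by
  intro j
  induction j with
  | zero => exact h k
  | succ j ih =>
    rw [bsProd_succ, bsProd_succ]
    refine Set.mul_subset_mul ih ?_
    have : k + (j + 1) + 1 = k + 1 + (j + 1) := by omega
    rw [← this]
    exact h _

end BSAux

section TowerAux
variable {G : Type*} [Group G]

/-- Normal of NsMem: `1 ∈ U n`. -/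
lemma NsMem.one_mem' {T : GroupTower G} {U : ℕ → Set G} (hU : ∀ n, T.NsMem n (U n)) :
    ∀ i, (1 : G) ∈ U i := fun i => (hU i).2.2.1

/-- Continuity of inclusions along the tower. -/
lemma incl_cont_le (T : GroupTower G) {n m : ℕ} (h : n ≤ m) :
    Continuous[T.τ n, T.τ m]
      (fun y : T.H n => (⟨(y : G), (monotone_nat_of_le_succ T.mono h) y.2⟩ : T.H m)) := by
  induction m, h using Nat.le_induction with
  | base =>
    letI := T.τ n
    exact continuous_id
  | succ m hm ih =>
    letI := T.τ n
    letI := T.τ m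
    letI := T.τ (m + 1)
    exact Continuous.comp (T.incl_cont m) ih

/-- The conjugation lemma. -/
lemma conj_lemma (T : GroupTower G) (g : G) {U : ℕ → Set G}
    (hU : ∀ n, T.NsMem n (U n)) (k : ℕ) :
    ∃ (V : ℕ → Set G) (k' : ℕ), (∀ n, T.NsMem n (V n)) ∧
      ∀ x ∈ bsU V k', g * x * g⁻¹ ∈ bsU U k := by
  classical
  obtain ⟨m, hm⟩ := T.union g
  have hmono : Monotone T.H := monotone_nat_of_le_succ T.mono
  set k' := max k m with hk'
  have key : ∀ n, ∃ Vn : Set G, T.NsMem n Vn ∧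
      (k' ≤ n → ∀ x ∈ Vn, g * x * g⁻¹ ∈ U n) := by
    intro n
    by_cases h : k' ≤ n
    · letI := T.τ n
      haveI := T.topGroup n
      have hg : g ∈ T.H n := hmono ((le_max_right k m).trans h) hm
      have hsymA : ∀ a : T.H n, g * (a : G) * g⁻¹ ∈ U n →
          g * ((a⁻¹ : T.H n) : G) * g⁻¹ ∈ U n := by
        intro a ha
        have h2 : (g * (a : G) * g⁻¹)⁻¹ ∈ (U n)⁻¹ := Set.inv_mem_inv.mpr ha
        rw [(hU n).2.2.2] at h2
        simpa [mul_assoc] using h2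
      refine ⟨(↑) '' {x : T.H n | g * ↑x * g⁻¹ ∈ U n}, ⟨?_, ?_, ?_, ?_⟩, ?_⟩
      · rintro x ⟨a, _, rfl⟩; exact a.2
      · rw [Subtype.coe_injective.preimage_image]
        have heq : {x : T.H n | g * ↑x * g⁻¹ ∈ U n} =
            (fun x : T.H n => (⟨g, hg⟩ : T.H n) * x * (⟨g, hg⟩ : T.H n)⁻¹) ⁻¹'
              (((↑) : T.H n → G) ⁻¹' U n) := rfl
        rw [heq]
        exact ((continuous_const.mul continuous_id).mul continuous_const).isOpen_preimage _
          ((hU n).2.1)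
      · exact ⟨1, by simpa using (hU n).2.2.1, rfl⟩
      · ext x
        constructor
        · intro hx
          rw [Set.mem_inv] at hx
          obtain ⟨a, ha, hax⟩ := hx
          refine ⟨a⁻¹, hsymA a ha, ?_⟩
          have hx' : (a : G) = x⁻¹ := hax
          simp [hx']
        · rintro ⟨a, ha, rfl⟩
          rw [Set.mem_inv]
          exact ⟨a⁻¹, hsymA a ha, by simp⟩
      · rintro - x ⟨a, ha, rfl⟩
        exact ha
    · exact ⟨U n, hU n, fun hkn => absurd hkn h⟩
  choose V hV1 hV2 using key
  have h1V : ∀ i, (1 : G) ∈ V i := NsMem.one_mem' hV1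
  have h1U : ∀ i, (1 : G) ∈ U i := NsMem.one_mem' hU
  have hprod : ∀ j, ∀ x ∈ bsProd V k' j, g * x * g⁻¹ ∈ bsProd U k' j := by
    intro j
    induction j with
    | zero => exact fun x hx => hV2 k' le_rfl x hx
    | succ j ih =>
      intro x hx
      rw [bsProd_succ] at hx
      obtain ⟨y, hy, u, hu, rfl⟩ := Set.mem_mul.mp hx
      have h1 := ih y hy
      have h2 := hV2 _ (Nat.le_add_right k' (j + 1)) u hu
      have heq : g * (y * u) * g⁻¹ = (g * y * g⁻¹) * (g * u * g⁻¹) := by group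
      rw [bsProd_succ, heq]
      exact Set.mul_mem_mul h1 h2
  have hplus : ∀ x ∈ bsPlus V k', g * x * g⁻¹ ∈ bsPlus U k' := by
    intro x hx
    obtain ⟨j, hj⟩ := Set.mem_iUnion.mp hx
    exact Set.mem_iUnion.mpr ⟨j, hprod j x hj⟩
  refine ⟨V, k', hV1, ?_⟩
  intro x hx
  obtain ⟨a, ha, b, hb, rfl⟩ := Set.mem_mul.mp hx
  have ha' : a⁻¹ ∈ bsPlus V k' := Set.mem_inv.mp ha
  have hga : g * a * g⁻¹ ∈ (bsPlus U k')⁻¹ := by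
    rw [Set.mem_inv]
    have := hplus _ ha'
    simpa [mul_assoc] using this
  have hgb : g * b * g⁻¹ ∈ bsPlus U k' := hplus _ hb
  have heq : g * (a * b) * g⁻¹ = (g * a * g⁻¹) * (g * b * g⁻¹) := by group
  refine bsU_mono h1U (le_max_left k m) ?_
  rw [heq]
  exact Set.mul_mem_mul hga hgb

/-- GC gives: the square of some bamboo-shoot set is inside a given one. -/
lemma square_lemma {T : GroupTower G} (hGC : T.GC) {U : ℕ → Set G}
    (hU : ∀ n, T.NsMem n (U n)) (k : ℕ) :
    ∃ W : ℕ → Set G, (∀ n, T.NsMem n (W n)) ∧ bsU W k * bsU W k ⊆ bsU U k := by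
  obtain ⟨W, hW, hWU⟩ := hGC U hU k
  refine ⟨W, hW, ?_⟩
  intro z hz
  obtain ⟨x, hx, y, hy, rfl⟩ := Set.mem_mul.mp hz
  have hx' : x⁻¹ ∈ bsU W k := by rw [← bsU_inv W k]; simpa using hx
  have hx'' : x ∈ (bsPlus U k)⁻¹ := by
    rw [Set.mem_inv]
    exact hWU hx'
  exact Set.mul_mem_mul hx'' (hWU hy)

lemma chain_exists {H : Type*} [Group H] [TopologicalSpace H] [IsTopologicalGroup H]
    {S : Set H} (hS : S ∈ 𝓝 (1 : H)) :
    ∃ W : ℕ → Set H, (∀ n, IsOpen (W n) ∧ (1 : H) ∈ W n ∧ (W n)⁻¹ = W n) ∧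
      (∀ n, W (n + 1) * W (n + 1) ⊆ W n) ∧ W 0 * W 0 ⊆ S := by
  have key : ∀ S' : Set H, S' ∈ 𝓝 (1 : H) → ∃ V : Set H,
      (IsOpen V ∧ (1 : H) ∈ V ∧ V⁻¹ = V) ∧ V * V ⊆ S' := by
    intro S' hS'
    obtain ⟨V, hVo, hV1, hVS⟩ := exists_open_nhds_one_mul_subset hS'
    refine ⟨V ∩ V⁻¹, ⟨hVo.inter hVo.inv, ⟨hV1, by simpa using hV1⟩, ?_⟩, ?_⟩
    · rw [Set.inter_inv, inv_inv, Set.inter_comm]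
    · exact (Set.mul_subset_mul Set.inter_subset_left Set.inter_subset_left).trans hVS
  obtain ⟨W0, hW0, hW0S⟩ := key S hS
  have step : ∀ q : {V : Set H // IsOpen V ∧ (1 : H) ∈ V ∧ V⁻¹ = V},
      ∃ r : {V : Set H // IsOpen V ∧ (1 : H) ∈ V ∧ V⁻¹ = V}, r.1 * r.1 ⊆ q.1 := by
    intro q
    obtain ⟨V, hV, hVq⟩ := key q.1 (q.2.1.mem_nhds q.2.2.1)
    exact ⟨⟨V, hV⟩, hVq⟩
  choose f hf using step
  refine ⟨fun n => (f^[n] ⟨W0, hW0⟩).1, fun n => (f^[n] ⟨W0, hW0⟩).2, fun n => ?_, ?_⟩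
  · simp only [Function.iterate_succ_apply']
    exact hf _
  · simpa using hW0S

/-- Trace neighborhood lemma: each bamboo-shoot neighborhood of a point of `H n`
contains a `τ n`-open trace neighborhood. -/
lemma trace_nbhd (T : GroupTower G) {U : ℕ → Set G} (hU : ∀ n, T.NsMem n (U n))
    (k n : ℕ) (y : T.H n) :
    ∃ O : Set (T.H n), IsOpen[T.τ n] O ∧ y ∈ O ∧
      ∀ z ∈ O, (z : G) ∈ (y : G) • bsU U k := by
  have hmono : Monotone T.H := monotone_nat_of_le_succ T.mono
  have h1U : ∀ i, (1 : G) ∈ U i := NsMem.one_mem' hU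
  set m := max n k with hmdef
  letI := T.τ n
  letI := T.τ m
  haveI := T.topGroup m
  have hym : (y : G) ∈ T.H m := hmono (le_max_left n k) y.2
  have hcm : Continuous[T.τ n, T.τ m]
      (fun z : T.H n => (⟨(y : G), hym⟩ : T.H m)⁻¹ *
        (⟨(z : G), hmono (le_max_left n k) z.2⟩ : T.H m)) :=
    Continuous.mul continuous_const (incl_cont_le T (le_max_left n k))
  refine ⟨_, hcm.isOpen_preimage _ ((hU m).2.1), ?_, ?_⟩
  · show ((y : G))⁻¹ * (y : G) ∈ U m
    simpa using h1U m
  · intro z hz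
    have hz' : (y : G)⁻¹ * (z : G) ∈ U m := hz
    exact Set.mem_smul_set.mpr ⟨(y : G)⁻¹ * (z : G),
      subset_bsU_of_le h1U (le_max_right n k) hz', by simp⟩

/-- Every compatible group topology is coarser than the bamboo-shoot neighborhoods. -/
lemma exists_bsU_subset (T : GroupTower G) (t' : TopologicalSpace G)
    (ht' : T.IsCompatGroupTopology t')
    {A : Set G} (hA : IsOpen[t'] A) {g : G} (hg : g ∈ A) :
    ∃ U : ℕ → Set G, (∀ n, T.NsMem n (U n)) ∧ g • bsU U 0 ⊆ A := by
  letI := t'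
  haveI := ht'.1
  set S : Set G := (fun x : G => g * x) ⁻¹' A with hSdef
  have hSopen : IsOpen S := (continuous_const.mul continuous_id).isOpen_preimage _ hA
  have hS1 : (1 : G) ∈ S := by simpa [hSdef] using hg
  obtain ⟨W, hW, hWchain, hWS⟩ := chain_exists (hSopen.mem_nhds hS1)
  set U : ℕ → Set G := fun n => W (n + 1) ∩ (T.H n : Set G) with hUdef
  have hU : ∀ n, T.NsMem n (U n) := by
    intro n
    refine ⟨Set.inter_subset_right, ?_, ⟨(hW (n + 1)).2.1, (T.H n).one_mem⟩, ?_⟩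
    · have heq : ((↑) : T.H n → G) ⁻¹' (U n) = ((↑) : T.H n → G) ⁻¹' (W (n + 1)) := by
        ext x
        simp [hUdef, x.2]
      rw [heq]
      exact @Continuous.isOpen_preimage _ _ (T.τ n) t' _ (ht'.2 n) _ ((hW (n + 1)).1)
    · rw [hUdef]
      simp only [Set.inter_inv, (hW (n + 1)).2.2]
      congr 1
      ext x
      simp [Set.mem_inv, inv_mem_iff]
  have h1W : ∀ n, (1 : G) ∈ W n := fun n => (hW n).2.1
  have hsub : bsPlus U 0 ⊆ W 0 := by
    intro x hx
    obtain ⟨j, hj⟩ := Set.mem_iUnion.mp hx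
    have h1 : bsProd U 0 j ⊆ bsProd W (0 + 1) j :=
      bsProd_mono_sets (fun i => Set.inter_subset_left) 0 j
    exact bsProd_subset_chain h1W hWchain j 0 (h1 hj)
  refine ⟨U, hU, ?_⟩
  intro z hz
  obtain ⟨x, hx, rfl⟩ := Set.mem_smul_set.mp hz
  have hx1 : x ∈ (W 0)⁻¹ * W 0 := by
    refine Set.mul_subset_mul (Set.inv_subset_inv.mpr hsub) hsub hx
  rw [(hW 0).2.2] at hx1
  have : x ∈ S := hWS hx1
  simpa [hSdef] using this

end TowerAux

/-- If a tower of topological groups satisfies (GC), then the Bamboo-Shoot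
topology is a (possibly non-Hausdorff) group topology on the union, and it coincides with
`τ_gr`, the finest group topology making all inclusions continuous. -/
theorem statement_7 {G : Type*} [Group G] (T : GroupTower G)
    (hGC : T.GC)
    (τBS : TopologicalSpace G) (hBS : T.IsBambooShoot τBS) :
    @IsTopologicalGroup G τBS _ ∧ T.IsGLim τBS := by
  letI : TopologicalSpace G := τBS
  have hmono : Monotone T.H := monotone_nat_of_le_succ T.mono
  have hCM : ContinuousMul G := by
    constructor
    · -- continuous_mul
      rw [continuous_iff_continuousAt]
      rintro ⟨a, b⟩
      rw [ContinuousAt, nhds_prod_eq,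
        ((hBS a).prod (hBS b)).tendsto_iff (hBS (a * b))]
      rintro ⟨U, k⟩ hU
      obtain ⟨W, hW, hWU⟩ := square_lemma hGC hU k
      obtain ⟨V, k1, hV, hconj⟩ := conj_lemma T b⁻¹ hW k
      refine ⟨((V, k1), (W, k)), ⟨hV, hW⟩, ?_⟩
      rintro ⟨x, y⟩ ⟨hx, hy⟩
      obtain ⟨v, hv, rfl⟩ := Set.mem_smul_set.mp hx
      obtain ⟨w, hw, rfl⟩ := Set.mem_smul_set.mp hy
      refine Set.mem_smul_set.mpr ⟨(b⁻¹ * v * b⁻¹⁻¹) * w, ?_, ?_⟩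
      · exact hWU (Set.mul_mem_mul (hconj v hv) hw)
      · simp only [smul_eq_mul]
        group
  have hCI : ContinuousInv G := by
    constructor
    · -- continuous_inv
      rw [continuous_iff_continuousAt]
      intro g
      rw [ContinuousAt, (hBS g).tendsto_iff (hBS g⁻¹)]
      rintro ⟨U, k⟩ hU
      obtain ⟨V, k', hV, hconj⟩ := conj_lemma T g hU k
      refine ⟨(V, k'), hV, ?_⟩
      intro x hx
      obtain ⟨v, hv, rfl⟩ := Set.mem_smul_set.mp hx
      have hv' : v⁻¹ ∈ bsU V k' := by
        rw [← bsU_inv V k']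
        simpa using hv
      refine Set.mem_smul_set.mpr ⟨g * v⁻¹ * g⁻¹, hconj v⁻¹ hv', ?_⟩
      simp only [smul_eq_mul]
      group
  have hTG : IsTopologicalGroup G := @IsTopologicalGroup.mk G τBS _ hCM hCI
  have hcont : ∀ n, Continuous[T.τ n, τBS] ((↑) : T.H n → G) := by
    intro n
    rw [continuous_def]
    intro A hA
    rw [@isOpen_iff_forall_mem_open _ (T.τ n)]
    intro y hy
    obtain ⟨⟨U, k⟩, hU, hsub⟩ := (hBS (y : G)).mem_iff.mp (hA.mem_nhds hy)
    obtain ⟨O, hOopen, hyO, hOsub⟩ := trace_nbhd T hU k n y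
    exact ⟨O, fun z hz => hsub (hOsub z hz), hOopen, hyO⟩
  refine ⟨hTG, ⟨hTG, hcont⟩, ?_⟩
  intro t' ht' A hA
  rw [@isOpen_iff_mem_nhds G τBS]
  intro g hg
  rw [(hBS g).mem_iff]
  obtain ⟨U, hU, hsubA⟩ := exists_bsU_subset T t' ht' hA hg
  exact ⟨(U, 0), hU, hsubA⟩
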